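/- arXiv:1305.0853 — 4 statements merged into one kernel-verified Lean document; each statement's English description precedes it below -/
import Mathlib

section
/- Suppose A_eq ∈ ℝ^{p×n} and A_in ∈ ℝ^{q×n} are entrywise nonnegative, every row of A_eq and of A_in has positive sum, every column of the stacked matrix [A_eq; A_in] has positive sum, and the feasible set {V ∈ ℝ^n : A_eq V = b_eq, A_in V ≤ b_in} is nonempty and bounded. Then the no-cost circuit system admits a solution (V, U_eq, U_in, I_eq, I_in). -/
/-!
Let `M = D - A_inᵀ D_in⁻¹ A_in` and minimize `V ⬝ᵥ M *ᵥ V` over the feasible set, which is compact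
and nonempty. At a minimizer `V` the derivative `2 (M V) ⬝ᵥ d` is nonnegative along every feasible
direction `d`, so by Farkas' lemma there are multipliers `λ` and `μ ≥ 0`, with `μ` supported on
the active inequalities, such that `M V = A_eqᵀ λ - A_inᵀ μ`. Then `U_eq = λ`,
`U_in = D_in⁻¹ A_in V - μ`, `I_in = D_in μ` and `I_eq = A_eq V - D_eq λ` solve the circuit system.
-/

open Matrix Finset

/-- A solution of the no-cost circuit system (circuit with no cost sub-circuit). -/
def NoCostCircuitSolution {n p q : ℕ} (Aeq : Matrix (Fin p) (Fin n) ℝ) (beq : Fin p → ℝ)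
    (Ain : Matrix (Fin q) (Fin n) ℝ) (bin : Fin q → ℝ)
    (V : Fin n → ℝ) (Ueq : Fin p → ℝ) (Uin : Fin q → ℝ)
    (Ieq : Fin p → ℝ) (Iin : Fin q → ℝ) : Prop :=
  Aeq.mulVec V = (Matrix.diagonal fun i => ∑ j, Aeq i j).mulVec Ueq + Ieq ∧
  Ain.mulVec V = (Matrix.diagonal fun i => ∑ j, Ain i j).mulVec Uin + Iin ∧
  Aeq.transpose.mulVec Ueq + Ain.transpose.mulVec Uin =
    (Matrix.diagonal fun j => (∑ i, Aeq i j) + (∑ i, Ain i j)).mulVec V ∧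
  Aeq.mulVec V = beq ∧
  Ain.mulVec V ≤ bin ∧
  0 ≤ Iin ∧
  (∀ i, (Ain.mulVec V - bin) i * Iin i = 0)

open Filter Topology

section Polyhedra

variable {n m l : Type*} [Fintype n]

section Farkas

variable {𝕜 : Type*} [Field 𝕜]

/-- The projection onto the hyperplane `u ⬝ᵥ d = 0` along `a` (when `a ⬝ᵥ d ≠ 0`). -/
def projAlong (a d : n → 𝕜) : (n → 𝕜) →ₗ[𝕜] n → 𝕜 :=
  LinearMap.id - ((a ⬝ᵥ d)⁻¹ • (dotProductBilin 𝕜 𝕜).flip d).smulRight a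

theorem projAlong_apply (a d u : n → 𝕜) :
    projAlong a d u = u - ((a ⬝ᵥ d)⁻¹ * (u ⬝ᵥ d)) • a := by
  simp [projAlong]

theorem projAlong_dotProduct (a d u v : n → 𝕜) :
    projAlong a d u ⬝ᵥ v = u ⬝ᵥ projAlong d a v := by
  simp only [projAlong_apply, sub_dotProduct, dotProduct_sub, smul_dotProduct, dotProduct_smul,
    smul_eq_mul, dotProduct_comm a d, dotProduct_comm a v]
  ring

theorem projAlong_dotProduct_self {a d : n → 𝕜} (h : a ⬝ᵥ d ≠ 0) (u : n → 𝕜) :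
    projAlong a d u ⬝ᵥ d = 0 := by
  rw [projAlong_apply, sub_dotProduct, smul_dotProduct, smul_eq_mul, mul_right_comm,
    inv_mul_cancel₀ h, one_mul, sub_self]

variable [LinearOrder 𝕜] [IsStrictOrderedRing 𝕜]

theorem exists_nonneg_sum_smul_eq_of_forall_dotProduct_nonneg {ι : Type*} [DecidableEq ι]
    (s : Finset ι) (w : ι → n → 𝕜) (g : n → 𝕜)
    (h : ∀ d, (∀ i ∈ s, 0 ≤ w i ⬝ᵥ d) → 0 ≤ g ⬝ᵥ d) :
    ∃ c : ι → 𝕜, 0 ≤ c ∧ (∀ i ∉ s, c i = 0) ∧ g = ∑ i ∈ s, c i • w i := by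
  induction s using Finset.induction_on generalizing w g with
  | empty =>
    have hg : g ⬝ᵥ g = 0 :=
      le_antisymm (by simpa using h (-g) (by simp)) (sum_nonneg fun i _ => mul_self_nonneg (g i))
    exact ⟨0, le_rfl, fun _ _ => rfl, by simpa using dotProduct_self_eq_zero.1 hg⟩
  | insert a s ha ih =>
    by_cases hs : ∀ d, (∀ i ∈ s, 0 ≤ w i ⬝ᵥ d) → 0 ≤ g ⬝ᵥ d
    · obtain ⟨c, hc, hcs, rfl⟩ := ih w g hs
      refine ⟨c, hc, fun i hi => hcs i fun h => hi (mem_insert_of_mem h), ?_⟩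
      rw [sum_insert ha, hcs a ha, zero_smul, zero_add]
    push Not at hs
    obtain ⟨d₀, hd₀, hgd₀⟩ := hs
    have hα : w a ⬝ᵥ d₀ < 0 := by
      by_contra! hα
      exact hgd₀.not_ge (h d₀ (forall_mem_insert .. |>.2 ⟨hα, hd₀⟩))
    -- Projecting along `w a` onto `d₀ᗮ` turns the problem into one with the generators in `s`.
    obtain ⟨c, hc, hcs, hPg⟩ := ih (projAlong (w a) d₀ ∘ w) (projAlong (w a) d₀ g) fun d hd => by
      rw [projAlong_dotProduct]
      refine h _ (forall_mem_insert .. |>.2 ⟨?_, fun i hi => ?_⟩)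
      · rw [dotProduct_comm, projAlong_dotProduct_self (by rw [dotProduct_comm]; exact hα.ne)]
      · rw [← projAlong_dotProduct]
        exact hd i hi
    set v := g - ∑ i ∈ s, c i • w i
    have hv : v = ((w a ⬝ᵥ d₀)⁻¹ * (v ⬝ᵥ d₀)) • w a := by
      have : projAlong (w a) d₀ v = 0 := by simp [v, map_sum, hPg]
      rwa [projAlong_apply, sub_eq_zero] at this
    have hγ : 0 ≤ (w a ⬝ᵥ d₀)⁻¹ * (v ⬝ᵥ d₀) := by
      refine mul_nonneg_of_nonpos_of_nonpos (inv_nonpos.2 hα.le) ?_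
      have : 0 ≤ ∑ i ∈ s, c i * (w i ⬝ᵥ d₀) := sum_nonneg fun i hi => mul_nonneg (hc i) (hd₀ i hi)
      simp only [v, sub_dotProduct, sum_dotProduct, smul_dotProduct, smul_eq_mul]
      linarith
    refine ⟨Function.update c a ((w a ⬝ᵥ d₀)⁻¹ * (v ⬝ᵥ d₀)), fun i => ?_, fun i hi => ?_, ?_⟩
    · rcases eq_or_ne i a with rfl | hi
      · simpa using hγ
      · simpa [hi] using hc i
    · rw [mem_insert, not_or] at hi
      rw [Function.update_of_ne hi.1, hcs i hi.2]
    · rw [sum_insert ha, Function.update_self, ← hv, sub_add_eq_add_sub, eq_sub_iff_add_eq,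
        add_right_inj]
      exact sum_congr rfl fun i hi => by rw [Function.update_of_ne (ne_of_mem_of_not_mem hi ha)]

theorem exists_eq_transpose_mulVec_sub_of_forall_dotProduct_nonneg [Fintype m] [Fintype l]
    [DecidableEq l] (A : Matrix m n 𝕜) (C : Matrix l n 𝕜) (S : Finset l) (g : n → 𝕜)
    (h : ∀ d, A *ᵥ d = 0 → (∀ i ∈ S, (C *ᵥ d) i ≤ 0) → 0 ≤ g ⬝ᵥ d) :
    ∃ (lam : m → 𝕜) (mu : l → 𝕜), 0 ≤ mu ∧ (∀ i ∉ S, mu i = 0) ∧ g = Aᵀ *ᵥ lam - Cᵀ *ᵥ mu := by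
  classical
  let w : (m ⊕ m) ⊕ l → n → 𝕜 := Sum.elim (Sum.elim (fun i => A i) (fun i => -A i)) fun i => -C i
  obtain ⟨c, hc, hcS, rfl⟩ := exists_nonneg_sum_smul_eq_of_forall_dotProduct_nonneg
    ((univ : Finset (m ⊕ m)).disjSum S) w g fun d hd => by
      refine h d (funext fun i => le_antisymm ?_ ?_) fun i hi => ?_
      · simpa [w, mulVec] using hd (.inl (.inr i)) (by simp)
      · simpa [w, mulVec] using hd (.inl (.inl i)) (by simp)
      · simpa [w, mulVec] using hd (.inr i) (by simpa using hi)
  refine ⟨fun i => c (.inl (.inl i)) - c (.inl (.inr i)), fun i => c (.inr i), fun i => hc _,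
    fun i hi => hcS _ (by simpa using hi), ?_⟩
  have hS : ∑ i ∈ S, c (.inr i) • w (.inr i) = ∑ i, c (.inr i) • w (.inr i) :=
    sum_subset (subset_univ S) fun i _ hi => by rw [hcS (.inr i) (by simpa using hi), zero_smul]
  rw [sum_disjSum, hS, Fintype.sum_sum_type, mulVec_transpose, mulVec_transpose, vecMul_eq_sum,
    vecMul_eq_sum]
  simp [w, sub_eq_add_neg, add_smul, sum_add_distrib]

end Farkas

def polyhedron {𝕜 : Type*} [Semiring 𝕜] [PartialOrder 𝕜] (A : Matrix m n 𝕜) (b : m → 𝕜)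
    (C : Matrix l n 𝕜) (e : l → 𝕜) : Set (n → 𝕜) :=
  {x | A *ᵥ x = b ∧ C *ᵥ x ≤ e}

theorem isClosed_polyhedron (A : Matrix m n ℝ) (b : m → ℝ) (C : Matrix l n ℝ) (e : l → ℝ) :
    IsClosed (polyhedron A b C e) := by
  have hA : Continuous fun x : n → ℝ => A *ᵥ x := continuous_const.matrix_mulVec continuous_id
  have hC : Continuous fun x : n → ℝ => C *ᵥ x := continuous_const.matrix_mulVec continuous_id
  exact (isClosed_eq hA continuous_const).inter (isClosed_le hC continuous_const)

theorem Matrix.IsSymm.dotProduct_mulVec_add_smul {R : Type*} [CommRing R] {M : Matrix n n R}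
    (hM : M.IsSymm) (x d : n → R) (t : R) :
    (x + t • d) ⬝ᵥ M *ᵥ (x + t • d) =
      x ⬝ᵥ M *ᵥ x + 2 * t * (M *ᵥ x ⬝ᵥ d) + t ^ 2 * (d ⬝ᵥ M *ᵥ d) := by
  have hsymm : x ⬝ᵥ M *ᵥ d = M *ᵥ x ⬝ᵥ d := by
    rw [dotProduct_mulVec, ← mulVec_transpose, hM.eq]
  simp only [mulVec_add, mulVec_smul, add_dotProduct, dotProduct_add, smul_dotProduct,
    dotProduct_smul, smul_eq_mul, hsymm, dotProduct_comm d (M *ᵥ x)]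
  ring

theorem Matrix.IsSymm.dotProduct_mulVec_nonneg_of_isMinOn {M : Matrix n n ℝ} (hM : M.IsSymm)
    {K : Set (n → ℝ)} {x d : n → ℝ} (hmin : IsMinOn (fun y => y ⬝ᵥ M *ᵥ y) K x)
    (hd : ∀ᶠ t in 𝓝[>] (0 : ℝ), x + t • d ∈ K) :
    0 ≤ M *ᵥ x ⬝ᵥ d := by
  by_contra! hneg
  have hslope : Tendsto (fun t => 2 * (M *ᵥ x ⬝ᵥ d) + t * (d ⬝ᵥ M *ᵥ d)) (𝓝[>] 0)
      (𝓝 (2 * (M *ᵥ x ⬝ᵥ d))) :=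
    tendsto_nhdsWithin_of_tendsto_nhds (Continuous.tendsto' (by fun_prop) 0 _ (by simp))
  obtain ⟨t, ht, htK, htneg⟩ := (eventually_mem_nhdsWithin.and
    (hd.and (hslope.eventually (gt_mem_nhds (by linarith : 2 * (M *ᵥ x ⬝ᵥ d) < 0))))).exists
  have := isMinOn_iff.1 hmin _ htK
  rw [hM.dotProduct_mulVec_add_smul] at this
  nlinarith [mul_neg_of_pos_of_neg (Set.mem_Ioi.1 ht) htneg]

theorem eventually_add_smul_mem_polyhedron [Finite l] {A : Matrix m n ℝ} {b : m → ℝ}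
    {C : Matrix l n ℝ} {e : l → ℝ} {x d : n → ℝ} (hx : x ∈ polyhedron A b C e) (hAd : A *ᵥ d = 0)
    (hCd : ∀ i, (C *ᵥ x) i = e i → (C *ᵥ d) i ≤ 0) :
    ∀ᶠ t in 𝓝[>] (0 : ℝ), x + t • d ∈ polyhedron A b C e := by
  have hA : ∀ t : ℝ, A *ᵥ (x + t • d) = b := by simp [mulVec_add, mulVec_smul, hAd, hx.1]
  have hC : ∀ (t : ℝ) i, (C *ᵥ (x + t • d)) i = (C *ᵥ x) i + t * (C *ᵥ d) i := by
    simp [mulVec_add, mulVec_smul]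
  simp only [polyhedron, Set.mem_ofPred_eq, hA, true_and, Pi.le_def, hC]
  refine eventually_all.2 fun i => ?_
  rcases (hx.2 i).eq_or_lt with hi | hi
  · filter_upwards [eventually_mem_nhdsWithin] with t ht
    nlinarith [hCd i hi, Set.mem_Ioi.1 ht]
  · have : Tendsto (fun t => (C *ᵥ x) i + t * (C *ᵥ d) i) (𝓝[>] 0) (𝓝 ((C *ᵥ x) i)) :=
      tendsto_nhdsWithin_of_tendsto_nhds (Continuous.tendsto' (by fun_prop) 0 _ (by simp))
    exact this.eventually (ge_mem_nhds hi)

theorem exists_lagrange_multipliers_of_isMinOn [Fintype m] [Fintype l] {M : Matrix n n ℝ}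
    (hM : M.IsSymm) {A : Matrix m n ℝ} {b : m → ℝ} {C : Matrix l n ℝ} {e : l → ℝ} {x : n → ℝ}
    (hx : x ∈ polyhedron A b C e) (hmin : IsMinOn (fun y => y ⬝ᵥ M *ᵥ y) (polyhedron A b C e) x) :
    ∃ (lam : m → ℝ) (mu : l → ℝ), 0 ≤ mu ∧ (∀ i, (C *ᵥ x - e) i * mu i = 0) ∧
      M *ᵥ x = Aᵀ *ᵥ lam - Cᵀ *ᵥ mu := by
  classical
  obtain ⟨lam, mu, hmu, hmuS, hgrad⟩ := exists_eq_transpose_mulVec_sub_of_forall_dotProduct_nonneg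
    A C {i | (C *ᵥ x) i = e i} (M *ᵥ x) fun d hAd hCd =>
      hM.dotProduct_mulVec_nonneg_of_isMinOn hmin
        (eventually_add_smul_mem_polyhedron hx hAd fun i hi => hCd i (by simpa using hi))
  refine ⟨lam, mu, hmu, fun i => ?_, hgrad⟩
  by_cases hi : (C *ᵥ x) i = e i
  · simp [hi]
  · simp [hmuS i (by simpa using hi)]

end Polyhedra

section Circuit

variable {n p q : ℕ}

noncomputable def noCostCircuitMatrix (Aeq : Matrix (Fin p) (Fin n) ℝ)
    (Ain : Matrix (Fin q) (Fin n) ℝ) : Matrix (Fin n) (Fin n) ℝ :=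
  diagonal (fun j => (∑ i, Aeq i j) + ∑ i, Ain i j) -
    Ainᵀ * diagonal (fun i => (∑ j, Ain i j)⁻¹) * Ain

theorem isSymm_noCostCircuitMatrix (Aeq : Matrix (Fin p) (Fin n) ℝ)
    (Ain : Matrix (Fin q) (Fin n) ℝ) : (noCostCircuitMatrix Aeq Ain).IsSymm :=
  (isSymm_diagonal _).sub (by simp [IsSymm, transpose_mul, Matrix.mul_assoc])

theorem exists_noCostCircuitSolution_of_kkt {Aeq : Matrix (Fin p) (Fin n) ℝ} {beq : Fin p → ℝ}
    {Ain : Matrix (Fin q) (Fin n) ℝ} {bin : Fin q → ℝ} (hAinRow : ∀ i, 0 < ∑ j, Ain i j)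
    {V : Fin n → ℝ} (hV : V ∈ polyhedron Aeq beq Ain bin) {lam : Fin p → ℝ} {mu : Fin q → ℝ}
    (hmu : 0 ≤ mu) (hcompl : ∀ i, (Ain *ᵥ V - bin) i * mu i = 0)
    (hstat : noCostCircuitMatrix Aeq Ain *ᵥ V = Aeqᵀ *ᵥ lam - Ainᵀ *ᵥ mu) :
    ∃ (Uin : Fin q → ℝ) (Ieq : Fin p → ℝ) (Iin : Fin q → ℝ),
      NoCostCircuitSolution Aeq beq Ain bin V lam Uin Ieq Iin := by
  refine ⟨diagonal (fun i => (∑ j, Ain i j)⁻¹) *ᵥ (Ain *ᵥ V) - mu,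
    Aeq *ᵥ V - diagonal (fun i => ∑ j, Aeq i j) *ᵥ lam, diagonal (fun i => ∑ j, Ain i j) *ᵥ mu,
    (add_sub_cancel _ _).symm, ?_, ?_, hV.1, hV.2, fun i => ?_, fun i => ?_⟩
  · ext i
    simp only [Pi.add_apply, Pi.sub_apply, mulVec_diagonal]
    field_simp [(hAinRow i).ne']
    ring
  · rw [noCostCircuitMatrix, sub_mulVec, ← mulVec_mulVec, ← mulVec_mulVec] at hstat
    rw [mulVec_sub]
    linear_combination (norm := module) -hstat
  · simpa [mulVec_diagonal] using mul_nonneg (hAinRow i).le (hmu i)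
  · rw [mulVec_diagonal, mul_left_comm, hcompl, mul_zero]

end Circuit

theorem noCost_circuit_has_solution_general {n p q : ℕ}
    (Aeq : Matrix (Fin p) (Fin n) ℝ) (beq : Fin p → ℝ)
    (Ain : Matrix (Fin q) (Fin n) ℝ) (bin : Fin q → ℝ)
    (hAinRow : ∀ i, 0 < ∑ j, Ain i j)
    (hfeas : ∃ V : Fin n → ℝ, Aeq.mulVec V = beq ∧ Ain.mulVec V ≤ bin)
    (hbdd : Bornology.IsBounded {V : Fin n → ℝ | Aeq.mulVec V = beq ∧ Ain.mulVec V ≤ bin}) :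
    ∃ (V : Fin n → ℝ) (Ueq : Fin p → ℝ) (Uin : Fin q → ℝ) (Ieq : Fin p → ℝ) (Iin : Fin q → ℝ),
      NoCostCircuitSolution Aeq beq Ain bin V Ueq Uin Ieq Iin := by
  have hcompact : IsCompact (polyhedron Aeq beq Ain bin) :=
    Metric.isCompact_of_isClosed_isBounded (isClosed_polyhedron Aeq beq Ain bin) hbdd
  obtain ⟨V, hV, hmin⟩ := hcompact.exists_isMinOn hfeas
    (by fun_prop : Continuous fun y => y ⬝ᵥ noCostCircuitMatrix Aeq Ain *ᵥ y).continuousOn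
  obtain ⟨lam, mu, hmu, hcompl, hstat⟩ :=
    exists_lagrange_multipliers_of_isMinOn (isSymm_noCostCircuitMatrix Aeq Ain) hV hmin
  obtain ⟨Uin, Ieq, Iin, hsol⟩ := exists_noCostCircuitSolution_of_kkt hAinRow hV hmu hcompl hstat
  exact ⟨V, lam, Uin, Ieq, Iin, hsol⟩

/-- **Lemma (existence of a solution to a no-cost circuit).** If `A_eq`, `A_in` are
entrywise nonnegative with positive row sums, every column of the stacked matrix
`[A_eq; A_in]` has positive sum, and the feasible set is nonempty and bounded, then the
no-cost circuit system admits a solution. -/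
theorem noCost_circuit_has_solution {n p q : ℕ}
    (Aeq : Matrix (Fin p) (Fin n) ℝ) (beq : Fin p → ℝ)
    (Ain : Matrix (Fin q) (Fin n) ℝ) (bin : Fin q → ℝ)
    (hAeq : ∀ i j, 0 ≤ Aeq i j)
    (hAin : ∀ i j, 0 ≤ Ain i j)
    (hAeqRow : ∀ i, 0 < ∑ j, Aeq i j)
    (hAinRow : ∀ i, 0 < ∑ j, Ain i j)
    (hCol : ∀ j, 0 < (∑ i, Aeq i j) + (∑ i, Ain i j))
    (hfeas : ∃ V : Fin n → ℝ, Aeq.mulVec V = beq ∧ Ain.mulVec V ≤ bin)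
    (hbdd : Bornology.IsBounded {V : Fin n → ℝ | Aeq.mulVec V = beq ∧ Ain.mulVec V ≤ bin}) :
    ∃ (V : Fin n → ℝ) (Ueq : Fin p → ℝ) (Uin : Fin q → ℝ) (Ieq : Fin p → ℝ) (Iin : Fin q → ℝ),
      NoCostCircuitSolution Aeq beq Ain bin V Ueq Uin Ieq Iin :=
  noCost_circuit_has_solution_general Aeq beq Ain bin hAinRow hfeas hbdd
end

section
/- Under Assumptions A1–A3, there exists a real number U_crit such that the full circuit system with parameter U_cost = U_crit admits a circuit solution, and for every circuit solution (V, U_eq, U_in, I_eq, I_in, I_cost) with parameter U_cost = U_crit, the vector V is an optimizer of the LP. -/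
open Matrix Finset

/-- Primal feasibility for the LP: `A_eq V = b_eq`, `A_in V ≤ b_in`. -/
def LPFeasible {n p q : ℕ} (Aeq : Matrix (Fin p) (Fin n) ℝ) (beq : Fin p → ℝ)
    (Ain : Matrix (Fin q) (Fin n) ℝ) (bin : Fin q → ℝ) (V : Fin n → ℝ) : Prop :=
  Aeq.mulVec V = beq ∧ Ain.mulVec V ≤ bin

/-- `V` is an optimizer of the LP: feasible, and of minimal cost among feasible points. -/
def LPOptimal {n p q : ℕ} (c : Fin n → ℝ) (Aeq : Matrix (Fin p) (Fin n) ℝ) (beq : Fin p → ℝ)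
    (Ain : Matrix (Fin q) (Fin n) ℝ) (bin : Fin q → ℝ) (V : Fin n → ℝ) : Prop :=
  LPFeasible Aeq beq Ain bin V ∧
    ∀ W : Fin n → ℝ, LPFeasible Aeq beq Ain bin W → c ⬝ᵥ V ≤ c ⬝ᵥ W

/-- Dual feasibility: `A_eqᵀ μ + A_inᵀ λ = c`, `λ ≥ 0`. -/
def DualFeasible {n p q : ℕ} (c : Fin n → ℝ) (Aeq : Matrix (Fin p) (Fin n) ℝ)
    (Ain : Matrix (Fin q) (Fin n) ℝ) (μ : Fin p → ℝ) (lam : Fin q → ℝ) : Prop :=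
  Aeq.transpose.mulVec μ + Ain.transpose.mulVec lam = c ∧ 0 ≤ lam

/-- `(μ, λ)` is an optimizer of the dual LP. -/
def DualOptimal {n p q : ℕ} (c : Fin n → ℝ) (Aeq : Matrix (Fin p) (Fin n) ℝ) (beq : Fin p → ℝ)
    (Ain : Matrix (Fin q) (Fin n) ℝ) (bin : Fin q → ℝ) (μ : Fin p → ℝ) (lam : Fin q → ℝ) : Prop :=
  DualFeasible c Aeq Ain μ lam ∧
    ∀ (μ' : Fin p → ℝ) (lam' : Fin q → ℝ), DualFeasible c Aeq Ain μ' lam' →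
      beq ⬝ᵥ μ' + bin ⬝ᵥ lam' ≤ beq ⬝ᵥ μ + bin ⬝ᵥ lam

/-- The full circuit system with cost-node voltage parameter `Ucost`. -/
def CircuitSolution {n p q : ℕ} (c : Fin n → ℝ) (Aeq : Matrix (Fin p) (Fin n) ℝ) (beq : Fin p → ℝ)
    (Ain : Matrix (Fin q) (Fin n) ℝ) (bin : Fin q → ℝ) (Ucost : ℝ)
    (V : Fin n → ℝ) (Ueq : Fin p → ℝ) (Uin : Fin q → ℝ)
    (Ieq : Fin p → ℝ) (Iin : Fin q → ℝ) (Icost : ℝ) : Prop :=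
  Aeq.mulVec V = (Matrix.diagonal fun i => ∑ j, Aeq i j).mulVec Ueq + Ieq ∧
  Ain.mulVec V = (Matrix.diagonal fun i => ∑ j, Ain i j).mulVec Uin + Iin ∧
  Ucost • c + Aeq.transpose.mulVec Ueq + Ain.transpose.mulVec Uin =
    (Matrix.diagonal fun j => c j + (∑ i, Aeq i j) + (∑ i, Ain i j)).mulVec V ∧
  Aeq.mulVec V = beq ∧
  Ain.mulVec V ≤ bin ∧
  0 ≤ Iin ∧
  (∀ i, (Ain.mulVec V - bin) i * Iin i = 0) ∧
  c ⬝ᵥ V = (∑ j, c j) * Ucost + Icost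

/-!
Eliminating the constraint-node voltages (Kron reduction) turns the circuit equations into the
KKT conditions of the quadratic program `min Vᵀ Q V - 2 U_cost cᵀ V` over the LP polyhedron `P`,
where the reduced conductance matrix `Q` is positive semidefinite with `Q 1 = c`.

Let `V*` minimise `Vᵀ Q V` over the optimal face of the LP, a compact polyhedron, and let `γ ≥ 0`
be the Farkas multiplier of its face constraint `cᵀ V ≤ cᵀ V*`. Since `-c` is a normal vector of
`P` at `V*`, the voltage `U_crit = -(1 + γ)` makes `V*` a KKT point. For any other KKT point `V`
at `U_crit`, adding the two normal-cone inequalities gives `(V - V*)ᵀ Q (V - V*) ≤ 0`, hence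
`Q (V - V*) = 0` and `cᵀ (V - V*) = 1ᵀ Q (V - V*) = 0`, so `V` is optimal as well.
-/

section Farkas

variable {ι E : Type*}

theorem exists_linearIndepOn_nonneg_sum_eq [AddCommGroup E] [Module ℝ E] (r : ι → E)
    (s : Finset ι) (η : ι → ℝ) (hη : ∀ i ∈ s, 0 ≤ η i) :
    ∃ t ⊆ s, LinearIndepOn ℝ r t ∧
      ∃ θ : ι → ℝ, (∀ i ∈ t, 0 ≤ θ i) ∧ ∑ i ∈ t, θ i • r i = ∑ i ∈ s, η i • r i := by
  classical
  induction s using Finset.strongInduction generalizing η with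
  | H s ih =>
  by_cases hli : LinearIndepOn ℝ r s
  · exact ⟨s, subset_rfl, hli, η, hη, rfl⟩
  obtain ⟨g, hg, j, hjs, hgj⟩ : ∃ g : ι → ℝ, ∑ i ∈ s, g i • r i = 0 ∧ ∃ j ∈ s, 0 < g j := by
    obtain ⟨g, hg, i, his, hgi⟩ := not_linearIndepOn_finset_iff.1 hli
    rcases hgi.lt_or_gt with h | h
    · exact ⟨-g, by simp [neg_smul, hg], i, his, by simpa using h⟩
    · exact ⟨g, hg, i, his, h⟩
  obtain ⟨k, hk, hk_min⟩ := (s.filter (0 < g ·)).exists_min_image (fun i => η i / g i)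
    ⟨j, mem_filter.2 ⟨hjs, hgj⟩⟩
  rw [mem_filter] at hk
  set τ := η k / g k
  have hτ : 0 ≤ τ := div_nonneg (hη k hk.1) hk.2.le
  have hη' : ∀ i ∈ s, 0 ≤ η i - τ * g i := by
    intro i hi
    rcases lt_or_ge 0 (g i) with hgi | hgi
    · have := hk_min i (mem_filter.2 ⟨hi, hgi⟩)
      rw [div_le_div_iff₀ hk.2 hgi] at this
      rw [sub_nonneg, div_mul_eq_mul_div, div_le_iff₀ hk.2]
      linarith
    · nlinarith [hη i hi]
  obtain ⟨t, hts, hli, θ, hθ, hsum⟩ :=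
    ih (s.erase k) (erase_ssubset hk.1) _ fun i hi => hη' i (mem_of_mem_erase hi)
  refine ⟨t, hts.trans (erase_subset _ _), hli, θ, hθ, hsum.trans ?_⟩
  rw [sum_erase _ (by simp [τ, div_mul_cancel₀ _ hk.2.ne'])]
  simp only [sub_smul, sum_sub_distrib, mul_smul, ← smul_sum, hg, smul_zero, sub_zero]

theorem isClosed_setOf_nonneg_sum_eq [Fintype ι] [AddCommGroup E] [Module ℝ E]
    [TopologicalSpace E] [IsTopologicalAddGroup E] [ContinuousSMul ℝ E] [T2Space E]
    (r : ι → E) : IsClosed {x | ∃ η : ι → ℝ, 0 ≤ η ∧ ∑ i, η i • r i = x} := by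
  classical
  have hcover : {x | ∃ η : ι → ℝ, 0 ≤ η ∧ ∑ i, η i • r i = x} =
      ⋃ t ∈ {t : Finset ι | LinearIndepOn ℝ r t},
        Fintype.linearCombination ℝ (fun i : t => r i) '' {θ | 0 ≤ θ} := by
    ext x
    simp only [Set.mem_ofPred_eq, Set.mem_iUnion, Set.mem_image, exists_prop]
    constructor
    · rintro ⟨η, hη, rfl⟩
      obtain ⟨t, -, hli, θ, hθ, hsum⟩ :=
        exists_linearIndepOn_nonneg_sum_eq r univ η fun i _ => hη i
      refine ⟨t, hli, fun i => θ i, fun i => hθ i i.2, ?_⟩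
      rw [Fintype.linearCombination_apply, sum_coe_sort t (fun i => θ i • r i), hsum]
    · rintro ⟨t, -, θ, hθ, rfl⟩
      refine ⟨fun i => if h : i ∈ t then θ ⟨i, h⟩ else 0,
        fun i => dite_nonneg (fun _ => hθ _) fun _ => le_rfl, ?_⟩
      rw [Fintype.linearCombination_apply, ← sum_subset (subset_univ t) fun i _ hi => by simp [hi],
        ← sum_coe_sort t]
      simp
  rw [hcover]
  refine (Set.toFinite _).isClosed_biUnion fun t ht => ?_
  have hker : LinearMap.ker (Fintype.linearCombination ℝ (fun i : t => r i)) = ⊥ :=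
    LinearMap.ker_eq_bot.2 (linearIndependent_iff_injective_fintypeLinearCombination.1 ht)
  exact (LinearMap.isClosedEmbedding_of_injective hker).isClosedMap _
    (isClosed_le continuous_const continuous_id)

theorem exists_nonneg_sum_eq_of_forall_dotProduct_nonpos {ι κ : Type*} [Fintype ι] [Fintype κ]
    (r : ι → κ → ℝ) (w : κ → ℝ) (h : ∀ d, (∀ i, r i ⬝ᵥ d ≤ 0) → w ⬝ᵥ d ≤ 0) :
    ∃ η : ι → ℝ, 0 ≤ η ∧ ∑ i, η i • r i = w := by
  classical
  set K := {x | ∃ η : ι → ℝ, 0 ≤ η ∧ ∑ i, η i • r i = x}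
  have hsmul : ∀ t : ℝ, 0 ≤ t → ∀ x ∈ K, t • x ∈ K := by
    rintro t ht _ ⟨η, hη, rfl⟩
    exact ⟨t • η, smul_nonneg ht hη, by simp [smul_sum, smul_smul]⟩
  have hconv : Convex ℝ K := by
    rintro _ ⟨η, hη, rfl⟩ _ ⟨θ, hθ, rfl⟩ a b ha hb -
    exact ⟨a • η + b • θ, add_nonneg (smul_nonneg ha hη) (smul_nonneg hb hθ),
      by simp [add_smul, sum_add_distrib, smul_sum, smul_smul]⟩
  by_contra hw
  obtain ⟨f, u, hfK, hfw⟩ :=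
    geometric_hahn_banach_closed_point hconv (isClosed_setOf_nonneg_sum_eq r) hw
  have hu : 0 < u := by simpa using hfK 0 ⟨0, le_rfl, by simp⟩
  -- `K` is a cone, so a functional bounded above on it is nonpositive there
  have hfK' : ∀ x ∈ K, f x ≤ 0 := by
    intro x hx
    by_contra! hfx
    have := hfK _ (hsmul (u / f x) (div_nonneg hu.le hfx.le) x hx)
    rw [map_smul, smul_eq_mul, div_mul_cancel₀ _ hfx.ne'] at this
    exact this.false
  set d : κ → ℝ := fun j => f (Pi.single j 1)
  have hfd : ∀ x, f x = x ⬝ᵥ d := fun x => by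
    have := LinearMap.pi_apply_eq_sum_univ (f : (κ → ℝ) →ₗ[ℝ] ℝ) x
    simp only [ContinuousLinearMap.coe_coe] at this
    refine this.trans (sum_congr rfl fun j _ => ?_)
    simp only [d, smul_eq_mul]
    congr 2
    ext k
    simp [Pi.single_apply, eq_comm]
  have hrd : ∀ i, r i ⬝ᵥ d ≤ 0 := fun i => by
    rw [← hfd]
    exact hfK' _ ⟨Pi.single i 1, by simp [Pi.single_nonneg], by simp [Pi.single_apply]⟩
  have := h d hrd
  rw [← hfd] at this
  linarith

end Farkas

namespace Matrix

variable {m k : Type*} [Fintype m] [DecidableEq m] [Fintype k]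

theorem IsSymm.dotProduct_mulVec_add_smul_s2 {Q : Matrix k k ℝ} (hQ : Q.IsSymm)
    (x d : k → ℝ) (t : ℝ) :
    (x + t • d) ⬝ᵥ Q *ᵥ (x + t • d) =
      x ⬝ᵥ Q *ᵥ x + 2 * t * (Q *ᵥ x ⬝ᵥ d) + t ^ 2 * (d ⬝ᵥ Q *ᵥ d) := by
  have hsymm : x ⬝ᵥ Q *ᵥ d = Q *ᵥ x ⬝ᵥ d := by
    rw [dotProduct_mulVec, ← mulVec_transpose, hQ.eq]
  simp only [mulVec_add, mulVec_smul, dotProduct_add, add_dotProduct, dotProduct_smul,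
    smul_dotProduct, hsymm, dotProduct_comm d (Q *ᵥ x), smul_eq_mul]
  ring

noncomputable def rowSumGram (A : Matrix m k ℝ) : Matrix k k ℝ :=
  Aᵀ * diagonal (fun i => (∑ j, A i j)⁻¹) * A

variable (A : Matrix m k ℝ)

theorem rowSumGram_mulVec (x : k → ℝ) :
    A.rowSumGram *ᵥ x = (fun i => (∑ j, A i j)⁻¹ * (A *ᵥ x) i) ᵥ* A := by
  rw [rowSumGram, ← mulVec_mulVec, ← mulVec_mulVec, mulVec_transpose]
  congr 1
  ext i
  exact mulVec_diagonal _ _ _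

theorem isSymm_rowSumGram : A.rowSumGram.IsSymm := by
  simp [IsSymm, rowSumGram, transpose_mul, Matrix.mul_assoc]

theorem dotProduct_rowSumGram_mulVec_le (hA : ∀ i j, 0 ≤ A i j) (x : k → ℝ) :
    x ⬝ᵥ A.rowSumGram *ᵥ x ≤ ∑ j, (∑ i, A i j) * x j ^ 2 := by
  rw [rowSumGram_mulVec, dotProduct_comm, ← dotProduct_mulVec, dotProduct]
  calc ∑ i, (∑ j, A i j)⁻¹ * (A *ᵥ x) i * (A *ᵥ x) i
      ≤ ∑ i, ∑ j, A i j * x j ^ 2 := by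
        refine sum_le_sum fun i _ => ?_
        have hcs : (A *ᵥ x) i ^ 2 ≤ (∑ j, A i j) * ∑ j, A i j * x j ^ 2 :=
          sum_sq_le_sum_mul_sum_of_sq_le_mul _ (fun j _ => hA i j)
            (fun j _ => mul_nonneg (hA i j) (sq_nonneg _)) fun j _ => by nlinarith
        rcases (sum_nonneg fun j _ => hA i j).eq_or_lt with h | h
        · rw [← h, _root_.inv_zero, MulZeroClass.zero_mul, MulZeroClass.zero_mul]
          exact sum_nonneg fun j _ => mul_nonneg (hA i j) (sq_nonneg _)
        · rw [mul_assoc, ← sq, inv_mul_le_iff₀ h]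
          exact hcs
    _ = ∑ j, (∑ i, A i j) * x j ^ 2 := by
        rw [sum_comm]
        simp [sum_mul]

theorem rowSumGram_mulVec_one (hA : ∀ i, ∑ j, A i j ≠ 0) :
    A.rowSumGram *ᵥ 1 = 1 ᵥ* A := by
  rw [rowSumGram_mulVec]
  congr 1
  ext i
  simp [mulVec, dotProduct, hA i]

end Matrix

section Polyhedron

open Filter Topology

variable {n p q : ℕ} (Aeq : Matrix (Fin p) (Fin n) ℝ) (beq : Fin p → ℝ)
  (Ain : Matrix (Fin q) (Fin n) ℝ) (bin : Fin q → ℝ)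

def InNormalCone (V w : Fin n → ℝ) : Prop :=
  ∃ (a : Fin p → ℝ) (b : Fin q → ℝ), 0 ≤ b ∧ (∀ i, (Ain *ᵥ V - bin) i * b i = 0) ∧
    w = a ᵥ* Aeq + b ᵥ* Ain

def IsFeasibleDirection (V d : Fin n → ℝ) : Prop :=
  Aeq *ᵥ d = 0 ∧ ∀ i, (Ain *ᵥ V) i = bin i → (Ain *ᵥ d) i ≤ 0

variable {Aeq beq Ain bin}

theorem isClosed_setOf_lpFeasible : IsClosed {V | LPFeasible Aeq beq Ain bin V} :=
  (isClosed_eq (continuous_const.matrix_mulVec continuous_id) continuous_const).inter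
    (isClosed_le (continuous_const.matrix_mulVec continuous_id) continuous_const)

theorem LPFeasible.isFeasibleDirection_sub {V W : Fin n → ℝ} (hW : LPFeasible Aeq beq Ain bin W)
    (hV : Aeq *ᵥ V = beq) : IsFeasibleDirection Aeq Ain bin V (W - V) := by
  refine ⟨by rw [mulVec_sub, hV, hW.1, sub_self], fun i hi => ?_⟩
  rw [mulVec_sub, Pi.sub_apply, hi, sub_nonpos]
  exact hW.2 i

theorem IsFeasibleDirection.eventually_lpFeasible {V d : Fin n → ℝ}
    (hd : IsFeasibleDirection Aeq Ain bin V d) (hV : LPFeasible Aeq beq Ain bin V) :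
    ∀ᶠ t in 𝓝[>] (0 : ℝ), LPFeasible Aeq beq Ain bin (V + t • d) := by
  -- inactive constraints stay slack for small steps, active ones are respected by `d`
  have hslack : ∀ i, ∀ᶠ t in 𝓝 (0 : ℝ),
      (Ain *ᵥ V) i < bin i → (Ain *ᵥ V) i + t * (Ain *ᵥ d) i ≤ bin i := fun i => by
    by_cases h : (Ain *ᵥ V) i < bin i
    · have hlim : Tendsto (fun t => (Ain *ᵥ V) i + t * (Ain *ᵥ d) i) (𝓝 0) (𝓝 ((Ain *ᵥ V) i)) :=
        (by fun_prop : Continuous fun t : ℝ => (Ain *ᵥ V) i + t * (Ain *ᵥ d) i).tendsto' 0 _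
          (by simp)
      filter_upwards [hlim.eventually (gt_mem_nhds h)] with t ht _ using ht.le
    · exact Eventually.of_forall fun _ h' => absurd h' h
  filter_upwards [self_mem_nhdsWithin, nhdsWithin_le_nhds (eventually_all.2 hslack)]
    with t (ht : 0 < t) hslack
  refine ⟨by rw [mulVec_add, mulVec_smul, hd.1, smul_zero, add_zero, hV.1], fun i => ?_⟩
  rw [mulVec_add, mulVec_smul, Pi.add_apply, Pi.smul_apply, smul_eq_mul]
  rcases (hV.2 i).lt_or_eq with h | h
  · exact hslack i h
  · rw [h]
    exact add_le_of_nonpos_right (mul_nonpos_of_nonneg_of_nonpos ht.le (hd.2 i h))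

theorem InNormalCone.add {V w w' : Fin n → ℝ} (h : InNormalCone Aeq Ain bin V w)
    (h' : InNormalCone Aeq Ain bin V w') : InNormalCone Aeq Ain bin V (w + w') := by
  obtain ⟨a, b, hb, hcs, rfl⟩ := h
  obtain ⟨a', b', hb', hcs', rfl⟩ := h'
  refine ⟨a + a', b + b', add_nonneg hb hb', fun i => ?_, by simp only [add_vecMul]; abel⟩
  rw [Pi.add_apply, mul_add, hcs i, hcs' i, add_zero]

theorem InNormalCone.dotProduct_nonpos {V w d : Fin n → ℝ} (h : InNormalCone Aeq Ain bin V w)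
    (hd : IsFeasibleDirection Aeq Ain bin V d) : w ⬝ᵥ d ≤ 0 := by
  obtain ⟨a, b, hb, hcs, rfl⟩ := h
  rw [add_dotProduct, ← dotProduct_mulVec, ← dotProduct_mulVec, hd.1, dotProduct_zero, zero_add]
  refine sum_nonpos fun i _ => ?_
  rcases mul_eq_zero.1 (hcs i) with hact | hbi
  · exact mul_nonpos_of_nonneg_of_nonpos (hb i) (hd.2 i (sub_eq_zero.1 hact))
  · simp [hbi]

theorem inNormalCone_of_forall_dotProduct_nonpos {V w : Fin n → ℝ}
    (h : ∀ d, IsFeasibleDirection Aeq Ain bin V d → w ⬝ᵥ d ≤ 0) : InNormalCone Aeq Ain bin V w := by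
  classical
  let act (i : Fin q) : Prop := (Ain *ᵥ V) i = bin i
  -- the feasible directions are cut out by the rows `±Aeq i` and the active rows of `Ain`
  let r : Fin p ⊕ Fin p ⊕ Fin q → Fin n → ℝ :=
    Sum.elim (fun i => Aeq i) (Sum.elim (fun i => -Aeq i) fun i => if act i then Ain i else 0)
  obtain ⟨η, hη, hw⟩ := exists_nonneg_sum_eq_of_forall_dotProduct_nonpos r w fun d hd => by
    refine h d ⟨funext fun i => le_antisymm (hd (.inl i)) ?_, fun i hi => ?_⟩
    · have := hd (.inr (.inl i))
      simp only [r, Sum.elim_inr, Sum.elim_inl, neg_dotProduct, neg_nonpos] at this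
      exact this
    · have := hd (.inr (.inr i))
      simp only [r, act, hi, Sum.elim_inr, if_true] at this
      exact this
  refine ⟨fun i => η (.inl i) - η (.inr (.inl i)), fun i => if act i then η (.inr (.inr i)) else 0,
    fun i => ite_nonneg (hη _) le_rfl, fun i => ?_, ?_⟩
  · by_cases hi : act i <;> simp [act, hi]
  · rw [← hw, Fintype.sum_sum_type, Fintype.sum_sum_type, vecMul_eq_sum, vecMul_eq_sum]
    simp only [r, Sum.elim_inl, Sum.elim_inr, smul_neg, sum_neg_distrib, smul_ite, smul_zero,
      sub_smul, sum_sub_distrib, ite_smul, zero_smul]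
    abel

end Polyhedron

section Optimality

open Filter Topology

variable {n p q : ℕ} {Aeq : Matrix (Fin p) (Fin n) ℝ} {beq : Fin p → ℝ}
  {Ain : Matrix (Fin q) (Fin n) ℝ} {bin : Fin q → ℝ}

theorem LPOptimal.inNormalCone_neg {c V : Fin n → ℝ} (hV : LPOptimal c Aeq beq Ain bin V) :
    InNormalCone Aeq Ain bin V (-c) := by
  refine inNormalCone_of_forall_dotProduct_nonpos fun d hd => ?_
  obtain ⟨t, hfeas, ht : 0 < t⟩ :=
    ((hd.eventually_lpFeasible hV.1).and self_mem_nhdsWithin).exists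
  have hle := hV.2 _ hfeas
  rw [dotProduct_add, dotProduct_smul, smul_eq_mul, le_add_iff_nonneg_right] at hle
  rw [neg_dotProduct, neg_nonpos]
  exact (mul_nonneg_iff_of_pos_left ht).1 hle

theorem IsMinOn.inNormalCone_neg_mulVec {Q : Matrix (Fin n) (Fin n) ℝ} (hQ : Q.IsSymm)
    {V : Fin n → ℝ} (hmin : IsMinOn (fun x => x ⬝ᵥ Q *ᵥ x) {x | LPFeasible Aeq beq Ain bin x} V)
    (hV : LPFeasible Aeq beq Ain bin V) : InNormalCone Aeq Ain bin V (-(Q *ᵥ V)) := by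
  refine inNormalCone_of_forall_dotProduct_nonpos fun d hd => ?_
  have hlim : Tendsto (fun t => 2 * (Q *ᵥ V ⬝ᵥ d) + t * (d ⬝ᵥ Q *ᵥ d)) (𝓝[>] 0)
      (𝓝 (2 * (Q *ᵥ V ⬝ᵥ d))) :=
    ((by fun_prop : Continuous fun t : ℝ => 2 * (Q *ᵥ V ⬝ᵥ d) + t * (d ⬝ᵥ Q *ᵥ d)).tendsto'
      0 _ (by simp)).mono_left nhdsWithin_le_nhds
  have hslope : 0 ≤ 2 * (Q *ᵥ V ⬝ᵥ d) := by
    refine ge_of_tendsto hlim ?_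
    filter_upwards [hd.eventually_lpFeasible hV, self_mem_nhdsWithin] with t hfeas (ht : 0 < t)
    have hle := isMinOn_iff.1 hmin _ hfeas
    simp only [hQ.dotProduct_mulVec_add_smul_s2] at hle
    refine (mul_nonneg_iff_of_pos_left ht).1 ?_
    nlinarith
  rw [neg_dotProduct, neg_nonpos]
  linarith

-- `(Ain ·)` rather than `Ain`, so that the `vecCons` simp lemmas apply to the stacked matrix.
theorem lpOptimal_iff_lpFeasible_cons {c V₀ : Fin n → ℝ} (hV₀ : LPOptimal c Aeq beq Ain bin V₀)
    (V : Fin n → ℝ) : LPOptimal c Aeq beq Ain bin V ↔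
      LPFeasible Aeq beq (of (vecCons c (Ain ·))) (vecCons (c ⬝ᵥ V₀) bin) V := by
  have hcons : of (vecCons c (Ain ·)) *ᵥ V ≤ vecCons (c ⬝ᵥ V₀) bin ↔
      c ⬝ᵥ V ≤ c ⬝ᵥ V₀ ∧ Ain *ᵥ V ≤ bin := by
    simp only [cons_mulVec, Pi.le_def, Fin.forall_fin_succ, cons_val_zero, cons_val_succ]
    rfl
  rw [LPFeasible, hcons]
  exact ⟨fun hV => ⟨hV.1.1, hV.2 V₀ hV₀.1, hV.1.2⟩,
    fun hV => ⟨⟨hV.1, hV.2.2⟩, fun W hW => hV.2.1.trans (hV₀.2 W hW)⟩⟩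

theorem InNormalCone.exists_sub_smul_of_cons {c V w : Fin n → ℝ} {β : ℝ}
    (h : InNormalCone Aeq (of (vecCons c (Ain ·))) (vecCons β bin) V w) :
    ∃ γ : ℝ, 0 ≤ γ ∧ InNormalCone Aeq Ain bin V (w - γ • c) := by
  obtain ⟨a, b, hb, hcs, rfl⟩ := h
  refine ⟨vecHead b, hb 0, a, vecTail b, fun i => hb i.succ, fun i => ?_, ?_⟩
  · have := hcs i.succ
    simp only [cons_mulVec, Pi.sub_apply, cons_val_succ] at this
    exact this
  · rw [vecMul_cons, add_sub_assoc, add_sub_cancel_left]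
    rfl

end Optimality

section Circuit

variable {n p q : ℕ}

/-- Kron reduction of the circuit onto the variable nodes: the Schur complement
`D_V - A_eqᵀ D_eq⁻¹ A_eq - A_inᵀ D_in⁻¹ A_in` left after eliminating the constraint nodes. -/
noncomputable def conductance (c : Fin n → ℝ) (Aeq : Matrix (Fin p) (Fin n) ℝ)
    (Ain : Matrix (Fin q) (Fin n) ℝ) : Matrix (Fin n) (Fin n) ℝ :=
  diagonal (fun j => c j + (∑ i, Aeq i j) + (∑ i, Ain i j)) - Aeq.rowSumGram - Ain.rowSumGram

variable (c : Fin n → ℝ) (Aeq : Matrix (Fin p) (Fin n) ℝ) (Ain : Matrix (Fin q) (Fin n) ℝ)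

theorem conductance_mulVec (V : Fin n → ℝ) :
    conductance c Aeq Ain *ᵥ V =
      (diagonal fun j => c j + (∑ i, Aeq i j) + (∑ i, Ain i j)) *ᵥ V
        - (fun i => (∑ j, Aeq i j)⁻¹ * (Aeq *ᵥ V) i) ᵥ* Aeq
        - (fun i => (∑ j, Ain i j)⁻¹ * (Ain *ᵥ V) i) ᵥ* Ain := by
  simp only [conductance, sub_mulVec, rowSumGram_mulVec]

theorem isSymm_conductance : (conductance c Aeq Ain).IsSymm :=
  ((isSymm_diagonal _).sub Aeq.isSymm_rowSumGram).sub Ain.isSymm_rowSumGram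

theorem conductance_posSemidef (hc : ∀ j, 0 ≤ c j) (hAeq : ∀ i j, 0 ≤ Aeq i j)
    (hAin : ∀ i j, 0 ≤ Ain i j) : (conductance c Aeq Ain).PosSemidef := by
  refine .of_dotProduct_mulVec_nonneg (isHermitian_iff_isSymm.2 (isSymm_conductance c Aeq Ain))
    fun x => ?_
  have hEq := Aeq.dotProduct_rowSumGram_mulVec_le hAeq x
  have hIn := Ain.dotProduct_rowSumGram_mulVec_le hAin x
  have hdiag : x ⬝ᵥ (diagonal fun j => c j + (∑ i, Aeq i j) + (∑ i, Ain i j)) *ᵥ x =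
      ∑ j, c j * x j ^ 2 + ∑ j, (∑ i, Aeq i j) * x j ^ 2 + ∑ j, (∑ i, Ain i j) * x j ^ 2 := by
    simp only [dotProduct, mulVec_diagonal, ← sum_add_distrib]
    exact sum_congr rfl fun j _ => by ring
  have hc' : 0 ≤ ∑ j, c j * x j ^ 2 := sum_nonneg fun j _ => mul_nonneg (hc j) (sq_nonneg _)
  rw [star_trivial, conductance, sub_mulVec, sub_mulVec, dotProduct_sub, dotProduct_sub, hdiag]
  linarith

theorem conductance_mulVec_one (hAeqRow : ∀ i, 0 < ∑ j, Aeq i j)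
    (hAinRow : ∀ i, 0 < ∑ j, Ain i j) : conductance c Aeq Ain *ᵥ 1 = c := by
  rw [conductance, sub_mulVec, sub_mulVec, Aeq.rowSumGram_mulVec_one fun i => (hAeqRow i).ne',
    Ain.rowSumGram_mulVec_one fun i => (hAinRow i).ne']
  ext j
  simp only [Pi.sub_apply, mulVec_diagonal, Pi.one_apply, mul_one, vecMul, dotProduct, one_mul]
  ring

end Circuit

section CircuitKKT

variable {n p q : ℕ} {c : Fin n → ℝ} {Aeq : Matrix (Fin p) (Fin n) ℝ} {beq : Fin p → ℝ}
  {Ain : Matrix (Fin q) (Fin n) ℝ} {bin : Fin q → ℝ}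

theorem exists_circuitSolution_iff (hAinRow : ∀ i, 0 < ∑ j, Ain i j) (U : ℝ) (V : Fin n → ℝ) :
    (∃ Ueq Uin Ieq Iin Icost, CircuitSolution c Aeq beq Ain bin U V Ueq Uin Ieq Iin Icost) ↔
      LPFeasible Aeq beq Ain bin V ∧
        InNormalCone Aeq Ain bin V (U • c - conductance c Aeq Ain *ᵥ V) := by
  set xe : Fin p → ℝ := fun i => (∑ j, Aeq i j)⁻¹ * (Aeq *ᵥ V) i
  set xi : Fin q → ℝ := fun i => (∑ j, Ain i j)⁻¹ * (Ain *ᵥ V) i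
  have hQV := conductance_mulVec c Aeq Ain V
  constructor
  · rintro ⟨Ueq, Uin, Ieq, Iin, Icost, -, hIin, hU, hVeq, hVin, hIin_nonneg, hslack, -⟩
    have hb : ∀ i, (xi - Uin) i = (∑ j, Ain i j)⁻¹ * Iin i := fun i => by
      have hi := congrFun hIin i
      simp only [Pi.add_apply, mulVec_diagonal] at hi
      simp only [xi, Pi.sub_apply, hi]
      field_simp [(hAinRow i).ne']
      ring
    refine ⟨⟨hVeq, hVin⟩, xe - Ueq, xi - Uin, fun i => ?_, fun i => ?_, ?_⟩
    · rw [Pi.zero_apply, hb]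
      exact mul_nonneg (inv_nonneg.2 (hAinRow i).le) (hIin_nonneg i)
    · rw [hb, mul_left_comm, hslack i, mul_zero]
    · rw [mulVec_transpose, mulVec_transpose] at hU
      rw [sub_vecMul, sub_vecMul]
      linear_combination hU - hQV
  · rintro ⟨hV, a, b, hb, hslack, hw⟩
    set Deq := diagonal fun i => ∑ j, Aeq i j
    set Din := diagonal fun i => ∑ j, Ain i j
    have hIin : ∀ i, (Ain *ᵥ V - Din *ᵥ (xi - b)) i = (∑ j, Ain i j) * b i := fun i => by
      simp only [Din, xi, Pi.sub_apply, mulVec_diagonal]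
      field_simp [(hAinRow i).ne']
      ring
    refine ⟨xe - a, xi - b, Aeq *ᵥ V - Deq *ᵥ (xe - a), Ain *ᵥ V - Din *ᵥ (xi - b),
      c ⬝ᵥ V - (∑ j, c j) * U, (add_sub_cancel _ _).symm, (add_sub_cancel _ _).symm, ?_, hV.1,
      hV.2, fun i => ?_, fun i => ?_, by ring⟩
    · rw [mulVec_transpose, mulVec_transpose, sub_vecMul, sub_vecMul]
      linear_combination hw + hQV
    · rw [Pi.zero_apply, hIin]
      exact mul_nonneg (hAinRow i).le (hb i)
    · rw [hIin, mul_left_comm, hslack i, mul_zero]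

end CircuitKKT

section Critical

variable {n p q : ℕ} {c : Fin n → ℝ} {Aeq : Matrix (Fin p) (Fin n) ℝ} {beq : Fin p → ℝ}
  {Ain : Matrix (Fin q) (Fin n) ℝ} {bin : Fin q → ℝ}

theorem exists_isMinOn_lpOptimal {f : (Fin n → ℝ) → ℝ} (hf : Continuous f)
    (hopt : ∃ V, LPOptimal c Aeq beq Ain bin V)
    (hbdd : Bornology.IsBounded {V | LPOptimal c Aeq beq Ain bin V}) :
    ∃ V, LPOptimal c Aeq beq Ain bin V ∧ IsMinOn f {V | LPOptimal c Aeq beq Ain bin V} V := by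
  obtain ⟨V₀, hV₀⟩ := hopt
  have hclosed : IsClosed {V | LPOptimal c Aeq beq Ain bin V} := by
    simpa only [lpOptimal_iff_lpFeasible_cons hV₀] using isClosed_setOf_lpFeasible
  exact (Metric.isCompact_of_isClosed_isBounded hclosed hbdd).exists_isMinOn ⟨V₀, hV₀⟩
    hf.continuousOn

theorem exists_smul_sub_mulVec_inNormalCone {Q : Matrix (Fin n) (Fin n) ℝ} (hQ : Q.IsSymm)
    {Vb : Fin n → ℝ} (hVb : LPOptimal c Aeq beq Ain bin Vb)
    (hmin : IsMinOn (fun x => x ⬝ᵥ Q *ᵥ x) {V | LPOptimal c Aeq beq Ain bin V} Vb) :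
    ∃ U : ℝ, InNormalCone Aeq Ain bin Vb (U • c - Q *ᵥ Vb) := by
  simp only [lpOptimal_iff_lpFeasible_cons hVb] at hmin
  obtain ⟨γ, -, hγ⟩ := (hmin.inNormalCone_neg_mulVec hQ
    ((lpOptimal_iff_lpFeasible_cons hVb Vb).1 hVb)).exists_sub_smul_of_cons
  refine ⟨-(1 + γ), ?_⟩
  convert hVb.inNormalCone_neg.add hγ using 1
  module

theorem dotProduct_eq_of_inNormalCone {Q : Matrix (Fin n) (Fin n) ℝ} (hQ : Q.PosSemidef)
    (hQc : Q *ᵥ 1 = c) {U : ℝ} {V W : Fin n → ℝ} (hV : LPFeasible Aeq beq Ain bin V)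
    (hW : LPFeasible Aeq beq Ain bin W) (hVN : InNormalCone Aeq Ain bin V (U • c - Q *ᵥ V))
    (hWN : InNormalCone Aeq Ain bin W (U • c - Q *ᵥ W)) : c ⬝ᵥ V = c ⬝ᵥ W := by
  have hsymm : Q.IsSymm := isHermitian_iff_isSymm.1 hQ.1
  have h₁ := hVN.dotProduct_nonpos (hW.isFeasibleDirection_sub hV.1)
  have h₂ := hWN.dotProduct_nonpos (hV.isFeasibleDirection_sub hW.1)
  have hsum : (W - V) ⬝ᵥ Q *ᵥ (W - V) =
      (U • c - Q *ᵥ V) ⬝ᵥ (W - V) + (U • c - Q *ᵥ W) ⬝ᵥ (V - W) := by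
    rw [← neg_sub W V, dotProduct_neg, ← sub_eq_add_neg, ← sub_dotProduct, dotProduct_comm,
      mulVec_sub]
    congr 1
    abel
  have hquad : (W - V) ⬝ᵥ Q *ᵥ (W - V) = 0 :=
    le_antisymm (hsum ▸ add_nonpos h₁ h₂) (by simpa using hQ.dotProduct_mulVec_nonneg (W - V))
  have hker : Q *ᵥ (W - V) = 0 := (hQ.dotProduct_mulVec_zero_iff _).1 (by simpa using hquad)
  have : c ⬝ᵥ (W - V) = 0 := by
    rw [← hQc, dotProduct_comm, dotProduct_mulVec, ← mulVec_transpose, hsymm.eq, hker,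
      zero_dotProduct]
  rw [dotProduct_sub, sub_eq_zero] at this
  exact this.symm

end Critical

theorem exists_Ucrit_general {n p q : ℕ}
    (c : Fin n → ℝ) (Aeq : Matrix (Fin p) (Fin n) ℝ) (beq : Fin p → ℝ)
    (Ain : Matrix (Fin q) (Fin n) ℝ) (bin : Fin q → ℝ)
    -- Assumption A1: primal feasible, set of primal optimizers nonempty and bounded
    (hA1opt : ∃ V, LPOptimal c Aeq beq Ain bin V)
    (hA1bdd : Bornology.IsBounded {V : Fin n → ℝ | LPOptimal c Aeq beq Ain bin V})
    -- Assumption A3: nonnegativity and positivity of row/column sums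
    (hc : ∀ j, 0 ≤ c j)
    (hAeq : ∀ i j, 0 ≤ Aeq i j)
    (hAin : ∀ i j, 0 ≤ Ain i j)
    (hAeqRow : ∀ i, 0 < ∑ j, Aeq i j)
    (hAinRow : ∀ i, 0 < ∑ j, Ain i j) :
    ∃ Ucrit : ℝ,
      (∃ (V : Fin n → ℝ) (Ueq : Fin p → ℝ) (Uin : Fin q → ℝ)
         (Ieq : Fin p → ℝ) (Iin : Fin q → ℝ) (Icost : ℝ),
         CircuitSolution c Aeq beq Ain bin Ucrit V Ueq Uin Ieq Iin Icost) ∧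
      (∀ (V : Fin n → ℝ) (Ueq : Fin p → ℝ) (Uin : Fin q → ℝ)
         (Ieq : Fin p → ℝ) (Iin : Fin q → ℝ) (Icost : ℝ),
         CircuitSolution c Aeq beq Ain bin Ucrit V Ueq Uin Ieq Iin Icost →
         LPOptimal c Aeq beq Ain bin V) := by
  set Q := conductance c Aeq Ain
  obtain ⟨Vb, hVb, hmin⟩ :=
    exists_isMinOn_lpOptimal (by fun_prop : Continuous fun x => x ⬝ᵥ Q *ᵥ x) hA1opt hA1bdd
  obtain ⟨U, hU⟩ := exists_smul_sub_mulVec_inNormalCone (isSymm_conductance c Aeq Ain) hVb hmin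
  refine ⟨U, ⟨Vb, (exists_circuitSolution_iff hAinRow U Vb).2 ⟨hVb.1, hU⟩⟩, ?_⟩
  intro V Ueq Uin Ieq Iin Icost hsol
  obtain ⟨hV, hVN⟩ := (exists_circuitSolution_iff hAinRow U V).1 ⟨Ueq, Uin, Ieq, Iin, Icost, hsol⟩
  have hcost : c ⬝ᵥ V = c ⬝ᵥ Vb :=
    dotProduct_eq_of_inNormalCone (conductance_posSemidef c Aeq Ain hc hAeq hAin)
      (conductance_mulVec_one c Aeq Ain hAeqRow hAinRow) hV hVb.1 hVN hU
  exact ⟨hV, fun W hW => hcost ▸ hVb.2 W hW⟩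

/-- **Lemma (existence of `U_crit`).** Under Assumptions A1–A3 there exists a critical
cost-node voltage `U_crit` such that the full circuit system with `U_cost = U_crit` admits
a solution, and for every such solution the variable voltages `V` are an optimizer of the
LP. -/
theorem exists_Ucrit {n p q : ℕ}
    (c : Fin n → ℝ) (Aeq : Matrix (Fin p) (Fin n) ℝ) (beq : Fin p → ℝ)
    (Ain : Matrix (Fin q) (Fin n) ℝ) (bin : Fin q → ℝ)
    -- Assumption A1: primal feasible, set of primal optimizers nonempty and bounded
    (hA1feas : ∃ V, LPFeasible Aeq beq Ain bin V)
    (hA1opt : ∃ V, LPOptimal c Aeq beq Ain bin V)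
    (hA1bdd : Bornology.IsBounded {V : Fin n → ℝ | LPOptimal c Aeq beq Ain bin V})
    -- Assumption A2: dual feasible, set of dual optimizers nonempty and bounded
    (hA2feas : ∃ μ lam, DualFeasible c Aeq Ain μ lam)
    (hA2opt : ∃ μ lam, DualOptimal c Aeq beq Ain bin μ lam)
    (hA2bdd : Bornology.IsBounded
      {ul : (Fin p → ℝ) × (Fin q → ℝ) | DualOptimal c Aeq beq Ain bin ul.1 ul.2})
    -- Assumption A3: nonnegativity and positivity of row/column sums
    (hc : ∀ j, 0 ≤ c j)
    (hAeq : ∀ i j, 0 ≤ Aeq i j)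
    (hAin : ∀ i j, 0 ≤ Ain i j)
    (hAeqRow : ∀ i, 0 < ∑ j, Aeq i j)
    (hAinRow : ∀ i, 0 < ∑ j, Ain i j)
    (hcSum : 0 < ∑ j, c j)
    (hCol : ∀ j, 0 < c j + (∑ i, Aeq i j) + (∑ i, Ain i j)) :
    ∃ Ucrit : ℝ,
      (∃ (V : Fin n → ℝ) (Ueq : Fin p → ℝ) (Uin : Fin q → ℝ)
         (Ieq : Fin p → ℝ) (Iin : Fin q → ℝ) (Icost : ℝ),
         CircuitSolution c Aeq beq Ain bin Ucrit V Ueq Uin Ieq Iin Icost) ∧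
      (∀ (V : Fin n → ℝ) (Ueq : Fin p → ℝ) (Uin : Fin q → ℝ)
         (Ieq : Fin p → ℝ) (Iin : Fin q → ℝ) (Icost : ℝ),
         CircuitSolution c Aeq beq Ain bin Ucrit V Ueq Uin Ieq Iin Icost →
         LPOptimal c Aeq beq Ain bin V) :=
  exists_Ucrit_general c Aeq beq Ain bin hA1opt hA1bdd hc hAeq hAin hAeqRow hAinRow
end

section
/- Let A_eq ∈ ℝ^{p×n} and A_in ∈ ℝ^{q×n} be entrywise nonnegative with every row of A_eq and of A_in having positive sum, let D_eq, D_in, D be as defined, and set Q = D − A_eq^T D_eq^{-1} A_eq − A_in^T D_in^{-1} A_in. Suppose (V, μ, λ) ∈ ℝ^n × ℝ^p × ℝ^q satisfies the KKT system: A_eq^T μ + A_in^T λ + Q V = 0; A_eq V = b_eq; A_in V ≤ b_in; λ ≥ 0; and (A_in V − b_in)_i · λ_i = 0 for every i. Then, defining I_eq = D_eq μ, U_eq = D_eq^{-1} A_eq V − μ, I_in = D_in λ, and U_in = D_in^{-1} A_in V − λ, the tuple (V, U_eq, U_in, I_eq, I_in) is a solution of the no-cost circuit system. -/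
open Matrix Finset

/-! Splitting `A V = D (D⁻¹ A V - y) + D y` with `y = μ` or `y = λ` gives the two branch equations;
with `Q` expanded, stationarity is the node balance rearranged; and the sign and complementarity
conditions on `I_in = D_in λ` are those of `λ`, scaled by the positive row sums. -/

namespace Matrix

section InvDiagonal

variable {ι 𝕜 : Type*} [Fintype ι] [DecidableEq ι] [Field 𝕜]

theorem diagonal_mulVec_diagonal_inv_mulVec {d : ι → 𝕜} (hd : ∀ i, d i ≠ 0)
    (x : ι → 𝕜) : diagonal d *ᵥ (diagonal (fun i => (d i)⁻¹) *ᵥ x) = x := by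
  rw [mulVec_mulVec, diagonal_mul_diagonal]
  simp only [mul_inv_cancel₀ (hd _), diagonal_one, one_mulVec]

theorem diagonal_mulVec_sub_add_diagonal_mulVec {d : ι → 𝕜} (hd : ∀ i, d i ≠ 0)
    (x y : ι → 𝕜) :
    diagonal d *ᵥ (diagonal (fun i => (d i)⁻¹) *ᵥ x - y) + diagonal d *ᵥ y = x := by
  rw [mulVec_sub, sub_add_cancel, diagonal_mulVec_diagonal_inv_mulVec hd]

end InvDiagonal

theorem transpose_mulVec_sub_add_eq_of_add_mulVec_eq_zero {ι ι' κ R : Type*} [Fintype ι]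
    [Fintype ι'] [Fintype κ] [CommRing R]
    (A : Matrix ι κ R) (B : Matrix ι' κ R) (D : Matrix κ κ R) (E : Matrix ι ι R)
    (F : Matrix ι' ι' R) (V : κ → R) (μ : ι → R) (lam : ι' → R)
    (h : Aᵀ *ᵥ μ + Bᵀ *ᵥ lam + (D - Aᵀ * E * A - Bᵀ * F * B) *ᵥ V = 0) :
    Aᵀ *ᵥ (E *ᵥ (A *ᵥ V) - μ) + Bᵀ *ᵥ (F *ᵥ (B *ᵥ V) - lam) = D *ᵥ V := by
  simp only [sub_mulVec, ← mulVec_mulVec] at h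
  simp only [mulVec_sub]
  linear_combination -h

end Matrix

theorem kkt_gives_noCost_circuit_solution_general {n p q : ℕ}
    (Aeq : Matrix (Fin p) (Fin n) ℝ) (beq : Fin p → ℝ)
    (Ain : Matrix (Fin q) (Fin n) ℝ) (bin : Fin q → ℝ)
    (hAeqRow : ∀ i, 0 < ∑ j, Aeq i j)
    (hAinRow : ∀ i, 0 < ∑ j, Ain i j)
    (V : Fin n → ℝ) (μ : Fin p → ℝ) (lam : Fin q → ℝ)
    -- the KKT system for the QP with matrix Q = D − A_eqᵀ D_eq⁻¹ A_eq − A_inᵀ D_in⁻¹ A_in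
    (hstat : Aeq.transpose.mulVec μ + Ain.transpose.mulVec lam +
      ((Matrix.diagonal fun j => (∑ i, Aeq i j) + (∑ i, Ain i j)) -
        Aeq.transpose * (Matrix.diagonal fun i => (∑ j, Aeq i j)⁻¹) * Aeq -
        Ain.transpose * (Matrix.diagonal fun i => (∑ j, Ain i j)⁻¹) * Ain).mulVec V = 0)
    (heq : Aeq.mulVec V = beq)
    (hin : Ain.mulVec V ≤ bin)
    (hlam : 0 ≤ lam)
    (hcompl : ∀ i, (Ain.mulVec V - bin) i * lam i = 0) :
    NoCostCircuitSolution Aeq beq Ain bin V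
      ((Matrix.diagonal fun i => (∑ j, Aeq i j)⁻¹).mulVec (Aeq.mulVec V) - μ)
      ((Matrix.diagonal fun i => (∑ j, Ain i j)⁻¹).mulVec (Ain.mulVec V) - lam)
      ((Matrix.diagonal fun i => ∑ j, Aeq i j).mulVec μ)
      ((Matrix.diagonal fun i => ∑ j, Ain i j).mulVec lam) := by
  refine ⟨(diagonal_mulVec_sub_add_diagonal_mulVec (fun i => (hAeqRow i).ne') _ _).symm,
    (diagonal_mulVec_sub_add_diagonal_mulVec (fun i => (hAinRow i).ne') _ _).symm,
    transpose_mulVec_sub_add_eq_of_add_mulVec_eq_zero _ _ _ _ _ _ _ _ hstat, heq, hin,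
    fun i => ?_, fun i => ?_⟩
  · rw [Pi.zero_apply, mulVec_diagonal]
    exact mul_nonneg (hAinRow i).le (hlam i)
  · rw [mulVec_diagonal, mul_left_comm, hcompl i, mul_zero]

/-- **From KKT points of the auxiliary QP to circuit solutions.** With
`Q = D − A_eqᵀ D_eq⁻¹ A_eq − A_inᵀ D_in⁻¹ A_in`, any KKT triple `(V, μ, λ)` yields a
solution of the no-cost circuit system via `I_eq = D_eq μ`, `U_eq = D_eq⁻¹ A_eq V − μ`,
`I_in = D_in λ`, `U_in = D_in⁻¹ A_in V − λ`. -/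
theorem kkt_gives_noCost_circuit_solution {n p q : ℕ}
    (Aeq : Matrix (Fin p) (Fin n) ℝ) (beq : Fin p → ℝ)
    (Ain : Matrix (Fin q) (Fin n) ℝ) (bin : Fin q → ℝ)
    (hAeq : ∀ i j, 0 ≤ Aeq i j)
    (hAin : ∀ i j, 0 ≤ Ain i j)
    (hAeqRow : ∀ i, 0 < ∑ j, Aeq i j)
    (hAinRow : ∀ i, 0 < ∑ j, Ain i j)
    (V : Fin n → ℝ) (μ : Fin p → ℝ) (lam : Fin q → ℝ)
    -- the KKT system for the QP with matrix Q = D − A_eqᵀ D_eq⁻¹ A_eq − A_inᵀ D_in⁻¹ A_in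
    (hstat : Aeq.transpose.mulVec μ + Ain.transpose.mulVec lam +
      ((Matrix.diagonal fun j => (∑ i, Aeq i j) + (∑ i, Ain i j)) -
        Aeq.transpose * (Matrix.diagonal fun i => (∑ j, Aeq i j)⁻¹) * Aeq -
        Ain.transpose * (Matrix.diagonal fun i => (∑ j, Ain i j)⁻¹) * Ain).mulVec V = 0)
    (heq : Aeq.mulVec V = beq)
    (hin : Ain.mulVec V ≤ bin)
    (hlam : 0 ≤ lam)
    (hcompl : ∀ i, (Ain.mulVec V - bin) i * lam i = 0) :
    NoCostCircuitSolution Aeq beq Ain bin V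
      ((Matrix.diagonal fun i => (∑ j, Aeq i j)⁻¹).mulVec (Aeq.mulVec V) - μ)
      ((Matrix.diagonal fun i => (∑ j, Ain i j)⁻¹).mulVec (Ain.mulVec V) - lam)
      ((Matrix.diagonal fun i => ∑ j, Aeq i j).mulVec μ)
      ((Matrix.diagonal fun i => ∑ j, Ain i j).mulVec lam) :=
  kkt_gives_noCost_circuit_solution_general Aeq beq Ain bin hAeqRow hAinRow V μ lam hstat heq hin
    hlam hcompl
end

section
/- Suppose the LP has an optimizer V* at which the linear independence constraint qualification (LICQ) holds, i.e., the collection consisting of all rows of A_eq together with those rows (A_in)_i of A_in that are active at V* (meaning (A_in V*)_i = (b_in)_i) is linearly independent in ℝ^n. Then the set of dual optimal solutions {(μ, λ) ∈ ℝ^p × ℝ^q : A_eq^T μ + A_in^T λ = c, λ ≥ 0, b_eq^T μ + b_in^T λ = c^T V*} contains at most one element; in particular it is bounded. -/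
open Matrix Finset

/-- **LICQ implies a unique (hence bounded) dual optimal solution.** If the LP has an
optimizer `V*` at which the rows of `A_eq` together with the active rows of `A_in` are
linearly independent, then the set of dual optimal solutions (dual feasible points with
zero duality gap) has at most one element; in particular it is bounded. -/
theorem dual_optimal_subsingleton_of_LICQ {n p q : ℕ}
    (c : Fin n → ℝ) (Aeq : Matrix (Fin p) (Fin n) ℝ) (beq : Fin p → ℝ)
    (Ain : Matrix (Fin q) (Fin n) ℝ) (bin : Fin q → ℝ)
    (Vstar : Fin n → ℝ)
    (hopt : LPOptimal c Aeq beq Ain bin Vstar)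
    -- LICQ at V*: all rows of A_eq together with the active rows of A_in are
    -- linearly independent
    (hLICQ : LinearIndependent ℝ
      (Sum.elim (fun i : Fin p => Aeq i)
        (fun i : {i : Fin q // Ain.mulVec Vstar i = bin i} => Ain i.1))) :
    {ul : (Fin p → ℝ) × (Fin q → ℝ) |
        Aeq.transpose.mulVec ul.1 + Ain.transpose.mulVec ul.2 = c ∧ 0 ≤ ul.2 ∧
        beq ⬝ᵥ ul.1 + bin ⬝ᵥ ul.2 = c ⬝ᵥ Vstar}.Subsingleton ∧
    Bornology.IsBounded
      {ul : (Fin p → ℝ) × (Fin q → ℝ) |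
        Aeq.transpose.mulVec ul.1 + Ain.transpose.mulVec ul.2 = c ∧ 0 ≤ ul.2 ∧
        beq ⬝ᵥ ul.1 + bin ⬝ᵥ ul.2 = c ⬝ᵥ Vstar} := by
  classical
  obtain ⟨⟨hAeqV, hAinV⟩, -⟩ := hopt
  -- complementary slackness: inactive multipliers vanish
  have cs : ∀ ul : (Fin p → ℝ) × (Fin q → ℝ),
      (Aeq.transpose.mulVec ul.1 + Ain.transpose.mulVec ul.2 = c ∧ 0 ≤ ul.2 ∧
        beq ⬝ᵥ ul.1 + bin ⬝ᵥ ul.2 = c ⬝ᵥ Vstar) →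
      ∀ i, Ain.mulVec Vstar i ≠ bin i → ul.2 i = 0 := by
    rintro ul ⟨hc, hl, hg⟩
    have h1 : c ⬝ᵥ Vstar = ul.1 ⬝ᵥ beq + ul.2 ⬝ᵥ (Ain.mulVec Vstar) := by
      rw [← hc, add_dotProduct, Matrix.mulVec_transpose, Matrix.mulVec_transpose,
        ← Matrix.dotProduct_mulVec, ← Matrix.dotProduct_mulVec, hAeqV]
    have h2 : ∑ i, ul.2 i * (bin i - Ain.mulVec Vstar i) = 0 := by
      have hcm : beq ⬝ᵥ ul.1 = ul.1 ⬝ᵥ beq := dotProduct_comm _ _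
      simp only [mul_sub, Finset.sum_sub_distrib]
      have hb : ∑ i, ul.2 i * bin i = bin ⬝ᵥ ul.2 := by
        simp [dotProduct, mul_comm]
      have ha : ∑ i, ul.2 i * Ain.mulVec Vstar i = ul.2 ⬝ᵥ Ain.mulVec Vstar := rfl
      rw [hb, ha]
      linarith [hg, h1, hcm]
    intro i hi
    have key := (Finset.sum_eq_zero_iff_of_nonneg (fun j _ =>
      mul_nonneg (hl j) (sub_nonneg.mpr (hAinV j)))).mp h2 i (Finset.mem_univ i)
    rcases mul_eq_zero.mp key with h | h
    · exact h
    · exact absurd (by linarith [sub_eq_zero.mp h]) hi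
  have hsub : {ul : (Fin p → ℝ) × (Fin q → ℝ) |
      Aeq.transpose.mulVec ul.1 + Ain.transpose.mulVec ul.2 = c ∧ 0 ≤ ul.2 ∧
      beq ⬝ᵥ ul.1 + bin ⬝ᵥ ul.2 = c ⬝ᵥ Vstar}.Subsingleton := by
    rintro x hx y hy
    obtain ⟨hcx, hlx, hgx⟩ := hx
    obtain ⟨hcy, hly, hgy⟩ := hy
    set dm : Fin p → ℝ := x.1 - y.1 with hdm
    set dl : Fin q → ℝ := x.2 - y.2 with hdl
    have hd : Aeq.transpose.mulVec dm + Ain.transpose.mulVec dl = 0 := by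
      rw [hdm, hdl, Matrix.mulVec_sub, Matrix.mulVec_sub]
      have : (Aeq.transpose.mulVec x.1 + Ain.transpose.mulVec x.2)
          - (Aeq.transpose.mulVec y.1 + Ain.transpose.mulVec y.2) = 0 := by
        rw [hcx, hcy, sub_self]
      rw [← this]; abel
    have hz : ∀ i, Ain.mulVec Vstar i ≠ bin i → dl i = 0 := by
      intro i hi
      have h1 := cs x ⟨hcx, hlx, hgx⟩ i hi
      have h2 := cs y ⟨hcy, hly, hgy⟩ i hi
      show x.2 i - y.2 i = 0
      rw [h1, h2, sub_self]
    set g : (Fin p ⊕ {i : Fin q // Ain.mulVec Vstar i = bin i}) → ℝ :=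
      Sum.elim dm (fun i => dl i.1) with hgdef
    have hsum : ∑ j, g j • (Sum.elim (fun i : Fin p => Aeq i)
        (fun i : {i : Fin q // Ain.mulVec Vstar i = bin i} => Ain i.1)) j = 0 := by
      rw [Fintype.sum_sum_type]
      simp only [hgdef, Sum.elim_inl, Sum.elim_inr]
      have h1 : ∑ i : {i : Fin q // Ain.mulVec Vstar i = bin i}, dl i.1 • Ain i.1
          = ∑ i : Fin q, dl i • Ain i := by
        rw [← Finset.sum_subtype (Finset.univ.filter (fun i => Ain.mulVec Vstar i = bin i))
          (by simp) (fun i => dl i • Ain i)]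
        exact Finset.sum_filter_of_ne (fun x _ h => by
          by_contra hx; exact h (by rw [hz x hx, zero_smul]))
      rw [h1]
      funext k
      have := congrFun hd k
      simpa [Matrix.mulVec, Matrix.transpose_apply, dotProduct, Finset.sum_apply,
        mul_comm] using this
    have hall := Fintype.linearIndependent_iff.mp hLICQ g hsum
    have hdm0 : dm = 0 := funext fun i => hall (Sum.inl i)
    have hdl0 : dl = 0 := by
      funext i
      by_cases h : Ain.mulVec Vstar i = bin i
      · exact hall (Sum.inr ⟨i, h⟩)
      · exact hz i h
    have e1 : x.1 = y.1 := by
      have := sub_eq_zero.mp (hdm.symm.trans hdm0); exact this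
    have e2 : x.2 = y.2 := by
      have := sub_eq_zero.mp (hdl.symm.trans hdl0); exact this
    exact Prod.ext e1 e2
  exact ⟨hsub, (hsub.finite).isBounded⟩
end
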